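/- Let θ ∈ (π/4, π/2) and define h*(z) = (1 + z² − 2cos θ √(z² − sin²θ))/sin²θ − 2 and h₊*(z) = (1 + z² + 2cos θ √(z² − sin²θ))/sin²θ − 2 for z ≥ sin θ. With F_γ = I + γ v₁ ⊗ v₁^⊥ and v₃ as above, for every γ ∈ ℝ one has h*(|F_γ v₃|) ≤ γ² ≤ h₊*(|F_γ v₃|). -/

import Mathlib

noncomputable section

def dot2 (a b : Fin 2 → ℝ) : ℝ := a 0 * b 0 + a 1 * b 1

def norm2 (a : Fin 2 → ℝ) : ℝ := Real.sqrt (dot2 a a)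

def perp (a : Fin 2 → ℝ) : Fin 2 → ℝ := ![-(a 1), a 0]

/-!
With `s = sin θ`, `c = cos θ`, the vector `v₃` is the unit vector with `v₁ ⬝ᵥ v₃ = -c` and
`v₁^⊥ ⬝ᵥ v₃ = -s`, so `F_γ v₃ = v₃ - γ s v₁` and `z = |F_γ v₃|` satisfies
`z² = 1 + 2γsc + γ²s²`, i.e. `z² - s² = (c + γs)²`. Solving for `γ`, the two values
`h*(z)` and `h₊*(z)` are the squares of the roots `(-c ± √(z² - s²))/s`, and `γ²` is one of them.
-/

open Matrix

lemma dot2_eq_dotProduct (a b : Fin 2 → ℝ) : dot2 a b = a ⬝ᵥ b := by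
  simp [dot2, dotProduct, Fin.sum_univ_two]

lemma norm2_sq (a : Fin 2 → ℝ) : norm2 a ^ 2 = a ⬝ᵥ a := by
  have : 0 ≤ dot2 a a := add_nonneg (mul_self_nonneg _) (mul_self_nonneg _)
  rw [norm2, Real.sq_sqrt this, dot2_eq_dotProduct]

lemma perp_dotProduct_self (a : Fin 2 → ℝ) : perp a ⬝ᵥ a = 0 := by
  simp [perp, dotProduct, Fin.sum_univ_two]; ring

section Shear

variable {n R : Type*} [Fintype n] [CommRing R]

lemma one_add_smul_vecMulVec_mulVec [DecidableEq n] (γ : R) (u w v : n → R) :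
    (1 + γ • vecMulVec u w) *ᵥ v = v + (γ * (w ⬝ᵥ v)) • u := by
  rw [add_mulVec, one_mulVec, smul_mulVec, vecMulVec_mulVec, op_smul_eq_smul, smul_smul]

lemma add_smul_dotProduct_self (v u : n → R) (k : R) :
    (v + k • u) ⬝ᵥ (v + k • u) = v ⬝ᵥ v + 2 * k * (u ⬝ᵥ v) + k ^ 2 * (u ⬝ᵥ u) := by
  simp only [add_dotProduct, dotProduct_add, smul_dotProduct, dotProduct_smul, smul_eq_mul,
    dotProduct_comm v u]
  ring

lemma one_add_smul_vecMulVec_mulVec_dotProduct_self [DecidableEq n] (γ : R) (u w v : n → R) :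
    ((1 + γ • vecMulVec u w) *ᵥ v) ⬝ᵥ ((1 + γ • vecMulVec u w) *ᵥ v) = v ⬝ᵥ v + 2 * γ * (w ⬝ᵥ v) * (u ⬝ᵥ v) + γ ^ 2 * (w ⬝ᵥ v) ^ 2 * (u ⬝ᵥ u) := by
  rw [one_add_smul_vecMulVec_mulVec, add_smul_dotProduct_self]
  ring

end Shear

section Bisector

variable {v₁ v₂ : Fin 2 → ℝ} {s c : ℝ}

lemma norm2_add_eq (hc : 0 ≤ c) (h₁ : v₁ ⬝ᵥ v₁ = 1) (h₂ : v₂ ⬝ᵥ v₂ = 1)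
    (h₁₂ : v₁ ⬝ᵥ v₂ = 2 * c ^ 2 - 1) : norm2 (v₁ + v₂) = 2 * c := by
  have : (v₁ + v₂) ⬝ᵥ (v₁ + v₂) = (2 * c) ^ 2 := by
    simp only [add_dotProduct, dotProduct_add, dotProduct_comm v₂ v₁]
    linear_combination h₁ + h₂ + 2 * h₁₂
  rw [norm2, dot2_eq_dotProduct, this, Real.sqrt_sq (by positivity)]

lemma dotProduct_self_smul_add_eq_one (hc : c ≠ 0) (h₁ : v₁ ⬝ᵥ v₁ = 1) (h₂ : v₂ ⬝ᵥ v₂ = 1)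
    (h₁₂ : v₁ ⬝ᵥ v₂ = 2 * c ^ 2 - 1) :
    (-(2 * c)⁻¹ • (v₁ + v₂)) ⬝ᵥ (-(2 * c)⁻¹ • (v₁ + v₂)) = 1 := by
  simp only [smul_dotProduct, dotProduct_smul, add_dotProduct, dotProduct_add,
    dotProduct_comm v₂ v₁, h₁, h₂, h₁₂, smul_eq_mul]
  field_simp
  ring

lemma dotProduct_smul_add_left (hc : c ≠ 0) (h₁ : v₁ ⬝ᵥ v₁ = 1)
    (h₁₂ : v₁ ⬝ᵥ v₂ = 2 * c ^ 2 - 1) : v₁ ⬝ᵥ (-(2 * c)⁻¹ • (v₁ + v₂)) = -c := by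
  rw [dotProduct_smul, dotProduct_add, h₁, h₁₂, smul_eq_mul]
  field_simp
  ring

lemma perp_dotProduct_smul_add (hc : c ≠ 0) (h₁₂ : perp v₁ ⬝ᵥ v₂ = 2 * s * c) :
    perp v₁ ⬝ᵥ (-(2 * c)⁻¹ • (v₁ + v₂)) = -s := by
  rw [dotProduct_smul, dotProduct_add, perp_dotProduct_self, h₁₂, smul_eq_mul]
  field_simp
  ring

end Bisector

lemma sq_bounds_of_sq_eq_quadratic {s c γ z : ℝ} (hs : 0 < s) (hc : 0 ≤ c) (hsc : s ^ 2 + c ^ 2 = 1)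
    (hz : z ^ 2 = 1 + 2 * γ * s * c + γ ^ 2 * s ^ 2) :
    (1 + z ^ 2 - 2 * c * √(z ^ 2 - s ^ 2)) / s ^ 2 - 2 ≤ γ ^ 2 ∧
      γ ^ 2 ≤ (1 + z ^ 2 + 2 * c * √(z ^ 2 - s ^ 2)) / s ^ 2 - 2 := by
  have hroot : √(z ^ 2 - s ^ 2) = |c + γ * s| := by
    rw [← Real.sqrt_sq_eq_abs]
    congr 1
    linear_combination hz - hsc
  have hlow : c * (c + γ * s) ≤ c * |c + γ * s| := mul_le_mul_of_nonneg_left (le_abs_self _) hc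
  have hhigh : c * -(c + γ * s) ≤ c * |c + γ * s| := mul_le_mul_of_nonneg_left (neg_le_abs _) hc
  rw [hroot, hz]
  constructor
  · rw [sub_le_iff_le_add, div_le_iff₀ (by positivity)]
    nlinarith
  · rw [le_sub_iff_add_le, le_div_iff₀ (by positivity)]
    nlinarith

theorem stmt14 (θ : ℝ) (hθ : θ ∈ Set.Ioo (Real.pi/4) (Real.pi/2))
    (v₁ v₂ : Fin 2 → ℝ) (hv₁ : norm2 v₁ = 1) (hv₂ : norm2 v₂ = 1)
    (hangle : dot2 v₁ v₂ = Real.cos (2*θ))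
    (hright : dot2 (perp v₁) v₂ = Real.sin (2*θ))
    (v₃ : Fin 2 → ℝ) (hv₃ : v₃ = fun i => -(v₁ i + v₂ i) / norm2 (fun j => v₁ j + v₂ j))
    (hstar hplus : ℝ → ℝ)
    (hhstar : hstar = fun z =>
      (1 + z^2 - 2 * Real.cos θ * Real.sqrt (z^2 - Real.sin θ ^ 2)) / Real.sin θ ^ 2 - 2)
    (hhplus : hplus = fun z =>
      (1 + z^2 + 2 * Real.cos θ * Real.sqrt (z^2 - Real.sin θ ^ 2)) / Real.sin θ ^ 2 - 2)
    (γ : ℝ) (Fγ : Matrix (Fin 2) (Fin 2) ℝ)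
    (hFγ : Fγ = 1 + γ • Matrix.vecMulVec v₁ (perp v₁)) :
    hstar (norm2 (Fγ.mulVec v₃)) ≤ γ^2 ∧ γ^2 ≤ hplus (norm2 (Fγ.mulVec v₃)) := by
  obtain ⟨hθ₁, hθ₂⟩ := hθ
  set s := Real.sin θ
  set c := Real.cos θ
  have hs : 0 < s := Real.sin_pos_of_pos_of_lt_pi (by linarith [Real.pi_pos]) (by linarith)
  have hc : 0 < c := Real.cos_pos_of_mem_Ioo ⟨by linarith [Real.pi_pos], hθ₂⟩
  have h₁ : v₁ ⬝ᵥ v₁ = 1 := by rw [← norm2_sq, hv₁, one_pow]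
  have h₂ : v₂ ⬝ᵥ v₂ = 1 := by rw [← norm2_sq, hv₂, one_pow]
  have h₁₂ : v₁ ⬝ᵥ v₂ = 2 * c ^ 2 - 1 := by rw [← dot2_eq_dotProduct, hangle, Real.cos_two_mul]
  have hperp : perp v₁ ⬝ᵥ v₂ = 2 * s * c := by
    rw [← dot2_eq_dotProduct, hright, Real.sin_two_mul]
  have hv₃' : v₃ = -(2 * c)⁻¹ • (v₁ + v₂) := by
    rw [hv₃, ← norm2_add_eq hc.le h₁ h₂ h₁₂]
    change (fun i => -(v₁ i + v₂ i) / norm2 (v₁ + v₂)) = _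
    ext i
    simp only [Pi.smul_apply, Pi.add_apply, smul_eq_mul]
    ring
  have hz : norm2 (Fγ *ᵥ v₃) ^ 2 = 1 + 2 * γ * s * c + γ ^ 2 * s ^ 2 := by
    rw [norm2_sq, hFγ, one_add_smul_vecMulVec_mulVec_dotProduct_self, hv₃',
      dotProduct_self_smul_add_eq_one hc.ne' h₁ h₂ h₁₂, dotProduct_smul_add_left hc.ne' h₁ h₁₂,
      perp_dotProduct_smul_add hc.ne' hperp, h₁]
    ring
  subst hhstar hhplus
  exact sq_bounds_of_sq_eq_quadratic hs hc.le (Real.sin_sq_add_cos_sq θ) hz
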